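/- Let A be a normal bounded distributive lattice, and let S(A) be its maximal spectrum: the set of maximal proper filters of A, topologized by taking the sets a^♯ = {M ∈ S(A) : a ∈ M}, for a ∈ A, as a base for the closed sets. Then S(A) is a compact Hausdorff space. -/

import Mathlib

/-- `F` is a (lattice) filter: contains `⊤`, is upward closed, and closed under meets. -/
def IsLatticeFilter {A : Type*} [Lattice A] [BoundedOrder A] (F : Set A) : Prop :=
  ⊤ ∈ F ∧ (∀ a b : A, a ∈ F → a ≤ b → b ∈ F) ∧ (∀ a b : A, a ∈ F → b ∈ F → a ⊓ b ∈ F)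

/-- `F` is a maximal proper filter. -/
def IsMaximalFilter {A : Type*} [Lattice A] [BoundedOrder A] (F : Set A) : Prop :=
  IsLatticeFilter F ∧ (⊥ : A) ∉ F ∧
    ∀ G : Set A, IsLatticeFilter G → (⊥ : A) ∉ G → F ⊆ G → G = F

/-- The maximal spectrum of `A`: the set of maximal proper filters of `A`. -/
def MaxSpectrum (A : Type*) [Lattice A] [BoundedOrder A] : Type _ :=
  {M : Set A // IsMaximalFilter M}

/-- The basic closed set `a^♯ = {M ∈ S(A) : a ∈ M}`. -/
def sharp {A : Type*} [Lattice A] [BoundedOrder A] (a : A) : Set (MaxSpectrum A) :=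
  {M : MaxSpectrum A | a ∈ M.1}

/-- The topology on the maximal spectrum, with the sets `a^♯` as a base for the
closed sets (equivalently, generated by the complements of the sets `a^♯`). -/
def spectrumTopology (A : Type*) [Lattice A] [BoundedOrder A] :
    TopologicalSpace (MaxSpectrum A) :=
  TopologicalSpace.generateFrom {s | ∃ a : A, s = (sharp a)ᶜ}

section Aux

variable {A : Type*} [DistribLattice A] [BoundedOrder A]

/-- Every proper filter extends to a maximal proper filter. -/
lemma exists_maximal_extension {F : Set A} (hF : IsLatticeFilter F) (hbot : (⊥ : A) ∉ F) :
    ∃ M : Set A, IsMaximalFilter M ∧ F ⊆ M := by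
  have hzorn : ∀ c ⊆ {G : Set A | IsLatticeFilter G ∧ (⊥ : A) ∉ G},
      IsChain (· ⊆ ·) c → c.Nonempty →
      ∃ ub ∈ {G : Set A | IsLatticeFilter G ∧ (⊥ : A) ∉ G}, ∀ s ∈ c, s ⊆ ub := by
    intro c hcS hchain hcne
    obtain ⟨G₀, hG₀⟩ := hcne
    refine ⟨⋃₀ c, ⟨⟨?_, ?_, ?_⟩, ?_⟩, fun s hs => Set.subset_sUnion_of_mem hs⟩
    · exact ⟨G₀, hG₀, (hcS hG₀).1.1⟩
    · rintro a b ⟨G, hG, haG⟩ hab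
      exact ⟨G, hG, (hcS hG).1.2.1 a b haG hab⟩
    · rintro a b ⟨G, hG, haG⟩ ⟨H, hH, hbH⟩
      rcases hchain.total hG hH with h | h
      · exact ⟨H, hH, (hcS hH).1.2.2 a b (h haG) hbH⟩
      · exact ⟨G, hG, (hcS hG).1.2.2 a b haG (h hbH)⟩
    · rintro ⟨G, hG, hbotG⟩
      exact (hcS hG).2 hbotG
  obtain ⟨M, hFM, hMmem, hMmax⟩ :=
    zorn_subset_nonempty {G : Set A | IsLatticeFilter G ∧ (⊥ : A) ∉ G} hzorn F ⟨hF, hbot⟩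
  refine ⟨M, ⟨hMmem.1, hMmem.2, ?_⟩, hFM⟩
  intro G hG hGbot hMG
  exact (hMmax ⟨hG, hGbot⟩ hMG).antisymm hMG

/-- If `c ∉ M` for a maximal filter `M`, then `c` meets some element of `M` in `⊥`. -/
lemma exists_inf_bot_of_not_mem {M : Set A} (hM : IsMaximalFilter M) {c : A} (hc : c ∉ M) :
    ∃ m ∈ M, m ⊓ c = ⊥ := by
  obtain ⟨⟨htop, hup, hinf⟩, hbot, hmax⟩ := hM
  by_contra hk
  push_neg at hk
  set G := {x : A | ∃ m ∈ M, m ⊓ c ≤ x} with hGdef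
  have hGf : IsLatticeFilter G := by
    refine ⟨⟨⊤, htop, le_top⟩, ?_, ?_⟩
    · rintro x y ⟨m, hm, hmx⟩ hxy
      exact ⟨m, hm, hmx.trans hxy⟩
    · rintro x y ⟨m, hm, hmx⟩ ⟨n, hn, hny⟩
      refine ⟨m ⊓ n, hinf _ _ hm hn, ?_⟩
      have h1 : m ⊓ n ⊓ c ≤ (m ⊓ c) ⊓ (n ⊓ c) :=
        le_inf (inf_le_inf_right c inf_le_left) (inf_le_inf_right c inf_le_right)
      exact h1.trans (inf_le_inf hmx hny)
  have hGbot : (⊥ : A) ∉ G := by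
    rintro ⟨m, hm, hmle⟩
    exact hk m hm (le_bot_iff.mp hmle)
  have hMG : M ⊆ G := fun m hm => ⟨m, hm, inf_le_left⟩
  have hGM : G = M := hmax G hGf hGbot hMG
  exact hc (hGM ▸ ⟨⊤, htop, inf_le_right⟩)

/-- Maximal filters are prime. -/
lemma maximal_prime {M : Set A} (hM : IsMaximalFilter M) {a b : A}
    (hab : a ⊔ b ∈ M) : a ∈ M ∨ b ∈ M := by
  by_contra h
  push_neg at h
  obtain ⟨ha, hb⟩ := h
  obtain ⟨m, hm, hma⟩ := exists_inf_bot_of_not_mem hM ha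
  obtain ⟨n, hn, hnb⟩ := exists_inf_bot_of_not_mem hM hb
  obtain ⟨⟨htop, hup, hinf⟩, hbot, hmax⟩ := hM
  have hmem : (m ⊓ n) ⊓ (a ⊔ b) ∈ M := hinf _ _ (hinf _ _ hm hn) hab
  have heq : (m ⊓ n) ⊓ (a ⊔ b) = ⊥ := by
    rw [inf_sup_left]
    have h1 : m ⊓ n ⊓ a ≤ ⊥ := hma ▸ inf_le_inf_right a inf_le_left
    have h2 : m ⊓ n ⊓ b ≤ ⊥ := hnb ▸ inf_le_inf_right b inf_le_right
    exact le_bot_iff.mp (sup_le h1 h2)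
  exact hbot (heq ▸ hmem)

/-- Two distinct maximal filters contain disjoint elements. -/
lemma exists_disjoint_of_ne {M N : Set A} (hM : IsMaximalFilter M) (hN : IsMaximalFilter N)
    (hMN : M ≠ N) : ∃ a ∈ M, ∃ b ∈ N, a ⊓ b = ⊥ := by
  by_contra h
  push_neg at h
  set G := {x : A | ∃ a ∈ M, ∃ b ∈ N, a ⊓ b ≤ x} with hGdef
  have hGf : IsLatticeFilter G := by
    refine ⟨⟨⊤, hM.1.1, ⊤, hN.1.1, le_top⟩, ?_, ?_⟩
    · rintro x y ⟨a, ha, b, hb, hle⟩ hxy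
      exact ⟨a, ha, b, hb, hle.trans hxy⟩
    · rintro x y ⟨a, ha, b, hb, hle⟩ ⟨a', ha', b', hb', hle'⟩
      refine ⟨a ⊓ a', hM.1.2.2 _ _ ha ha', b ⊓ b', hN.1.2.2 _ _ hb hb', ?_⟩
      have : (a ⊓ a') ⊓ (b ⊓ b') ≤ (a ⊓ b) ⊓ (a' ⊓ b') := by
        refine le_inf (le_inf ?_ ?_) (le_inf ?_ ?_)
        · exact inf_le_left.trans inf_le_left
        · exact inf_le_right.trans inf_le_left
        · exact inf_le_left.trans inf_le_right
        · exact inf_le_right.trans inf_le_right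
      exact this.trans (inf_le_inf hle hle')
  have hGbot : (⊥ : A) ∉ G := by
    rintro ⟨a, ha, b, hb, hle⟩
    exact h a ha b hb (le_bot_iff.mp hle)
  have hMG : M ⊆ G := fun m hm => ⟨m, hm, ⊤, hN.1.1, inf_le_left⟩
  have hNG : N ⊆ G := fun n hn => ⟨⊤, hM.1.1, n, hn, inf_le_right⟩
  have h1 : G = M := hM.2.2 G hGf hGbot hMG
  have h2 : G = N := hN.2.2 G hGf hGbot hNG
  exact hMN (h1 ▸ h2)

lemma sharp_top : sharp (⊤ : A) = Set.univ := by
  ext M; simp [sharp, M.2.1.1]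

lemma sharp_bot : sharp (⊥ : A) = (∅ : Set (MaxSpectrum A)) := by
  ext M; simp [sharp, M.2.2.1]

lemma sharp_inf (a b : A) : sharp (a ⊓ b) = sharp a ∩ sharp b := by
  ext M
  constructor
  · intro h
    exact ⟨M.2.1.2.1 _ _ h inf_le_left, M.2.1.2.1 _ _ h inf_le_right⟩
  · rintro ⟨h1, h2⟩
    exact M.2.1.2.2 _ _ h1 h2

lemma sharp_mono {a b : A} (h : a ≤ b) : sharp a ⊆ sharp b :=
  fun M hM => M.2.1.2.1 _ _ hM h

end Aux

/-- The maximal spectrum of a normal bounded distributive lattice is a compact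
Hausdorff space. -/
theorem maxSpectrum_compact_t2 {A : Type*} [DistribLattice A] [BoundedOrder A]
    (hnorm : ∀ a b : A, a ⊓ b = ⊥ →
      ∃ a' b' : A, a ⊓ a' = ⊥ ∧ b ⊓ b' = ⊥ ∧ a' ⊔ b' = ⊤) :
    @CompactSpace (MaxSpectrum A) (spectrumTopology A) ∧
      @T2Space (MaxSpectrum A) (spectrumTopology A) := by
  letI : TopologicalSpace (MaxSpectrum A) := spectrumTopology A
  have hopen : ∀ a : A, IsOpen ((sharp a)ᶜ : Set (MaxSpectrum A)) := fun a =>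
    TopologicalSpace.GenerateOpen.basic _ ⟨a, rfl⟩
  constructor
  · -- compactness
    rw [← isCompact_univ_iff, isCompact_iff_ultrafilter_le_nhds]
    intro f _
    set M : Set A := {a : A | sharp a ∈ f} with hMdef
    have hMf : IsLatticeFilter M := by
      refine ⟨?_, ?_, ?_⟩
      · show sharp (⊤ : A) ∈ f
        rw [sharp_top]; exact Filter.univ_mem
      · intro a b ha hab
        exact Filter.mem_of_superset ha (sharp_mono hab)
      · intro a b ha hb
        show sharp (a ⊓ b) ∈ f
        rw [sharp_inf]; exact Filter.inter_mem ha hb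
    have hMbot : (⊥ : A) ∉ M := by
      intro hb
      have h5 : (∅ : Set (MaxSpectrum A)) ∈ f := by
        rw [← sharp_bot (A := A)]; exact hb
      exact Filter.empty_notMem (f : Filter (MaxSpectrum A)) h5
    obtain ⟨Mx, hMx, hMMx⟩ := exists_maximal_extension hMf hMbot
    refine ⟨⟨Mx, hMx⟩, Set.mem_univ _, ?_⟩
    refine le_of_le_of_eq ?_ (@TopologicalSpace.nhds_generateFrom (MaxSpectrum A)
      {s | ∃ a : A, s = (sharp a)ᶜ} ⟨Mx, hMx⟩).symm
    refine le_iInf fun s => le_iInf fun hs => ?_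
    obtain ⟨hxs, a, rfl⟩ := hs
    rw [Filter.le_principal_iff]
    have haM : a ∉ M := fun haM => hxs (hMMx haM)
    have h6 : sharp a ∉ f := haM
    exact Ultrafilter.compl_mem_iff_notMem.mpr h6
  · -- Hausdorff
    refine ⟨fun x y hxy => ?_⟩
    have hne : x.1 ≠ y.1 := fun h => hxy (Subtype.ext h)
    obtain ⟨a, ha, b, hb, hab⟩ := exists_disjoint_of_ne x.2 y.2 hne
    obtain ⟨a', b', haa', hbb', htop⟩ := hnorm a b hab
    refine ⟨(sharp a')ᶜ, (sharp b')ᶜ, hopen a', hopen b', ?_, ?_, ?_⟩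
    · intro hx
      exact x.2.2.1 (haa' ▸ x.2.1.2.2 _ _ ha hx)
    · intro hy
      exact y.2.2.1 (hbb' ▸ y.2.1.2.2 _ _ hb hy)
    · rw [Set.disjoint_left]
      intro z hz hz'
      have : a' ⊔ b' ∈ z.1 := htop ▸ z.2.1.1
      rcases maximal_prime z.2 this with h | h
      · exact hz h
      · exact hz' h
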